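/- Let R be a commutative artinian ring, let (A, E, s) be an artin R-linear extriangulated category, and let (Φ, Q) = ({Φ_1, …, Φ_n}, {Q_1, …, Q_n}) be a minimal projective E-stratifying system. Suppose that for each 1 ≤ i ≤ n the functor Hom_A(Q_i, −) is left exact on the extriangulated category (F(Φ), E|F(Φ), s|F(Φ)). Then the Jordan-Hölder property holds for Φ-filtrations: any two Φ-filtrations of an object M of A have the same length, and for every j the multiplicity of Φ_j among the factors is the same; in particular the factors agree up to isomorphism and permutation. -/

import Mathlib

/-!
Common axiomatic framework: extriangulated categories in the sense of Nakaoka–Palu,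
formalised as a biadditive functor `E` together with a realisation predicate
`IsExtriangle` subject to the axioms (ET1)–(ET4), (ET3)ᵒᵖ, (ET4)ᵒᵖ.
-/

open CategoryTheory CategoryTheory.Limits ZeroObject

attribute [local instance] CategoryTheory.Limits.hasBinaryBiproducts_of_finite_biproducts

universe v u

namespace ExtriPaper

/-- The data underlying an extriangulated category: a biadditive functor `E` and,
for each extension `δ ∈ E(X, A)`, the predicate picking out the pairs of composable
morphisms `A ⟶ B ⟶ X` belonging to the equivalence class `s(δ)`. -/
structure PreExt (C : Type u) [Category.{v} C] [Preadditive C] where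
  E : Cᵒᵖ ⥤ C ⥤ AddCommGrpCat.{v}
  IsExtriangle : ∀ {A B X : C}, (A ⟶ B) → (B ⟶ X) → ↥((E.obj (Opposite.op X)).obj A) → Prop

namespace PreExt

variable {C : Type u} [Category.{v} C] [Preadditive C]
variable (S : PreExt C)

/-- The group `E(X, A)` of extensions of `X` by `A`. -/
abbrev Ext (X A : C) : Type v := ↥((S.E.obj (Opposite.op X)).obj A)

/-- Pushforward `a_* δ` of an extension along `a : A ⟶ A'`. -/
def push {X A A' : C} (a : A ⟶ A') (δ : S.Ext X A) : S.Ext X A' :=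
  (S.E.obj (Opposite.op X)).map a δ

/-- Pullback `c^* δ` of an extension along `c : X' ⟶ X`. -/
def pull {X' X A : C} (c : X' ⟶ X) (δ : S.Ext X A) : S.Ext X' A :=
  (S.E.map c.op).app A δ

section Axioms

variable [HasZeroObject C] [HasFiniteBiproducts C]

/-- The direct sum `δ ⊕ δ'` of two extensions. -/
noncomputable def sumExt {X X' A A' : C} (δ : S.Ext X A) (δ' : S.Ext X' A') :
    S.Ext (X ⊞ X') (A ⊞ A') :=
  S.push biprod.inl (S.pull biprod.fst δ) + S.push biprod.inr (S.pull biprod.snd δ')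

/-- The axioms of an extriangulated category (Nakaoka–Palu): `E` is biadditive,
`s` (encoded by `IsExtriangle`) is an additive realisation defined on equivalence
classes, and the axioms (ET3), (ET3)ᵒᵖ, (ET4), (ET4)ᵒᵖ hold. -/
structure IsET : Prop where
  /-- Biadditivity of `E` in the covariant variable. -/
  push_add : ∀ {X A A' : C} (a b : A ⟶ A') (δ : S.Ext X A),
      S.push (a + b) δ = S.push a δ + S.push b δ
  /-- Biadditivity of `E` in the contravariant variable. -/
  pull_add : ∀ {X X' A : C} (c d : X' ⟶ X) (δ : S.Ext X A),
      S.pull (c + d) δ = S.pull c δ + S.pull d δ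
  /-- Every extension is realised by a pair of composable morphisms. -/
  realize_exists : ∀ {A X : C} (δ : S.Ext X A),
      ∃ (B : C) (f : A ⟶ B) (g : B ⟶ X), S.IsExtriangle f g δ
  /-- The realisation is closed under equivalence of pairs of composable morphisms. -/
  realize_iso : ∀ {A B B' X : C} {f : A ⟶ B} {g : B ⟶ X} {δ : S.Ext X A} (e : B ≅ B'),
      S.IsExtriangle f g δ → S.IsExtriangle (f ≫ e.hom) (e.inv ≫ g) δ
  /-- Any two realisations of the same extension are equivalent. -/
  realize_unique : ∀ {A B B' X : C} {f : A ⟶ B} {g : B ⟶ X} {f' : A ⟶ B'} {g' : B' ⟶ X}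
      {δ : S.Ext X A}, S.IsExtriangle f g δ → S.IsExtriangle f' g' δ →
      ∃ e : B ≅ B', f ≫ e.hom = f' ∧ e.hom ≫ g' = g
  /-- Morphisms of extensions lift to morphisms of extriangles. -/
  realize_map : ∀ {A B X A' B' X' : C} {f : A ⟶ B} {g : B ⟶ X} {δ : S.Ext X A}
      {f' : A' ⟶ B'} {g' : B' ⟶ X'} {δ' : S.Ext X' A'},
      S.IsExtriangle f g δ → S.IsExtriangle f' g' δ' →
      ∀ (a : A ⟶ A') (c : X ⟶ X'), S.push a δ = S.pull c δ' →
      ∃ b : B ⟶ B', f ≫ b = a ≫ f' ∧ b ≫ g' = g ≫ c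
  /-- The zero extension is realised by the split pair. -/
  realize_zero : ∀ (A X : C),
      S.IsExtriangle (biprod.inl : A ⟶ A ⊞ X) (biprod.snd : A ⊞ X ⟶ X) (0 : S.Ext X A)
  /-- The realisation is additive. -/
  realize_sum : ∀ {A B X A' B' X' : C} {f : A ⟶ B} {g : B ⟶ X} {δ : S.Ext X A}
      {f' : A' ⟶ B'} {g' : B' ⟶ X'} {δ' : S.Ext X' A'},
      S.IsExtriangle f g δ → S.IsExtriangle f' g' δ' →
      S.IsExtriangle (biprod.map f f') (biprod.map g g') (S.sumExt δ δ')
  /-- Axiom (ET3). -/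
  et3 : ∀ {A B X A' B' X' : C} {f : A ⟶ B} {g : B ⟶ X} {δ : S.Ext X A}
      {f' : A' ⟶ B'} {g' : B' ⟶ X'} {δ' : S.Ext X' A'},
      S.IsExtriangle f g δ → S.IsExtriangle f' g' δ' →
      ∀ (a : A ⟶ A') (b : B ⟶ B'), f ≫ b = a ≫ f' →
      ∃ c : X ⟶ X', g ≫ c = b ≫ g' ∧ S.push a δ = S.pull c δ'
  /-- Axiom (ET3)ᵒᵖ. -/
  et3op : ∀ {A B X A' B' X' : C} {f : A ⟶ B} {g : B ⟶ X} {δ : S.Ext X A}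
      {f' : A' ⟶ B'} {g' : B' ⟶ X'} {δ' : S.Ext X' A'},
      S.IsExtriangle f g δ → S.IsExtriangle f' g' δ' →
      ∀ (b : B ⟶ B') (c : X ⟶ X'), g ≫ c = b ≫ g' →
      ∃ a : A ⟶ A', f ≫ b = a ≫ f' ∧ S.push a δ = S.pull c δ'
  /-- Axiom (ET4). -/
  et4 : ∀ {A B D F G : C} {f : A ⟶ B} {f' : B ⟶ D} {δ : S.Ext D A}
      {g : B ⟶ G} {g' : G ⟶ F} {δ' : S.Ext F B},
      S.IsExtriangle f f' δ → S.IsExtriangle g g' δ' →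
      ∃ (E₀ : C) (h : G ⟶ E₀) (d : D ⟶ E₀) (e : E₀ ⟶ F) (δ'' : S.Ext E₀ A),
        S.IsExtriangle (f ≫ g) h δ'' ∧
        S.IsExtriangle d e (S.push f' δ') ∧
        S.pull d δ'' = δ ∧
        S.push f δ'' = S.pull e δ' ∧
        f' ≫ d = g ≫ h ∧ h ≫ e = g'
  /-- Axiom (ET4)ᵒᵖ. -/
  et4op : ∀ {D B A F G : C} {p : D ⟶ B} {f₁ : B ⟶ A} {δ₁ : S.Ext A D}
      {q : F ⟶ G} {g₁ : G ⟶ B} {δ₁' : S.Ext B F},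
      S.IsExtriangle p f₁ δ₁ → S.IsExtriangle q g₁ δ₁' →
      ∃ (E₀ : C) (h : E₀ ⟶ G) (d : E₀ ⟶ D) (e : F ⟶ E₀) (δ'' : S.Ext A E₀),
        S.IsExtriangle h (g₁ ≫ f₁) δ'' ∧
        S.IsExtriangle e d (S.pull p δ₁') ∧
        S.push d δ'' = δ₁ ∧
        S.pull f₁ δ'' = S.push e δ₁' ∧
        d ≫ p = h ≫ g₁ ∧ e ≫ h = q

end Axioms

/-- A morphism is an inflation if it occurs as the first morphism of an extriangle. -/
def IsInflation {A B : C} (f : A ⟶ B) : Prop :=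
  ∃ (X : C) (g : B ⟶ X) (δ : S.Ext X A), S.IsExtriangle f g δ

/-- A morphism is a deflation if it occurs as the second morphism of an extriangle. -/
def IsDeflation {B X : C} (g : B ⟶ X) : Prop :=
  ∃ (A : C) (f : A ⟶ B) (δ : S.Ext X A), S.IsExtriangle f g δ

/-- An isomorphism of extriangles: a triple of isomorphisms compatible with the
structure morphisms and identifying the two extensions. -/
def TriIso {A B X A' B' X' : C} (f : A ⟶ B) (g : B ⟶ X) (δ : S.Ext X A)
    (f' : A' ⟶ B') (g' : B' ⟶ X') (δ' : S.Ext X' A') : Prop :=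
  ∃ (iA : A ≅ A') (iB : B ≅ B') (iX : X ≅ X'),
    f ≫ iB.hom = iA.hom ≫ f' ∧ g ≫ iX.hom = iB.hom ≫ g' ∧
    S.push iA.hom δ = S.pull iX.hom δ'

/-- A chain of `t` composable extriangles: inflations `obj i ⟶ obj (i+1)` each fitting
in an extriangle with cone `factor i`.  This underlies filtrations, inflation series
and composition series alike. -/
structure FChain (t : ℕ) where
  obj : Fin (t + 1) → C
  factor : Fin t → C
  f : ∀ i : Fin t, obj i.castSucc ⟶ obj i.succ
  g : ∀ i : Fin t, obj i.succ ⟶ factor i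
  δ : ∀ i : Fin t, S.Ext (factor i) (obj i.castSucc)
  ext : ∀ i : Fin t, S.IsExtriangle (f i) (g i) (δ i)

/-- The composite `obj 0 ⟶ obj i` of the morphisms of a chain. -/
def FChain.comp {t : ℕ} (c : S.FChain t) : ∀ i : Fin (t + 1), c.obj 0 ⟶ c.obj i :=
  Fin.induction (𝟙 _) (fun i ih => ih ≫ c.f i)

/-- The subcategory `F(P)` of objects admitting a filtration with factors in `P`. -/
def Filt (P : Set C) : Set C :=
  {M | ∃ (t : ℕ) (c : S.FChain t), IsZero (c.obj 0) ∧ c.obj (Fin.last t) = M ∧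
      ∀ i, c.factor i ∈ P}

/-- An `(E, s)`-simple object: a non-zero object `M` such that in every extriangle
`A →a M → X ⇢` the inflation `a` is zero or an isomorphism. -/
def SSimple (M : C) : Prop :=
  ¬ IsZero M ∧ ∀ (A X : C) (a : A ⟶ M) (g : M ⟶ X) (δ : S.Ext X A),
    S.IsExtriangle a g δ → a = 0 ∨ IsIso a

/-- The zero objects of `C` are `(E, s)`-simple-like. -/
def ZeroSimpleLike : Prop :=
  ∀ (A Z X : C) (f : A ⟶ Z) (g : Z ⟶ X) (δ : S.Ext X A),
    IsZero Z → S.IsExtriangle f g δ → IsZero A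

/-- `c` is an `(E, s)`-composition series of `M`. -/
def IsCompSeries {t : ℕ} (c : S.FChain t) (M : C) : Prop :=
  IsZero (c.obj 0) ∧ c.obj (Fin.last t) = M ∧ ∀ i, S.SSimple (c.factor i)

/-- `(A, E, s)` is a length extriangulated category. -/
def LengthCat : Prop :=
  ∀ M : C, (∃ (t : ℕ) (c : S.FChain t), S.IsCompSeries c M) ∧
    ∃ N : ℕ, ∀ (t : ℕ) (c : S.FChain t), S.IsCompSeries c M → t ≤ N

/-- `(A, E, s)` is a Jordan–Hölder extriangulated category: any two composition series
of an object have the same length and, up to a permutation, isomorphic simple factors. -/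
def JordanHolder : Prop :=
  ∀ (M : C) (t t' : ℕ) (c : S.FChain t) (c' : S.FChain t'),
    S.IsCompSeries c M → S.IsCompSeries c' M →
    ∃ e : Fin t ≃ Fin t', ∀ i, Nonempty (c.factor i ≅ c'.factor (e i))

/-- `c` is an `(E, s)`-inflation series of `B`: a filtration of `B` with non-zero factors. -/
def IsInflSeries {t : ℕ} (c : S.FChain t) (B : C) : Prop :=
  IsZero (c.obj 0) ∧ c.obj (Fin.last t) = B ∧ ∀ i, ¬ IsZero (c.factor i)

/-- `X` and `Y` admit isomorphic `(E, s)`-inflation series. -/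
def HaveIsoInflSeries (X Y : C) : Prop :=
  ∃ (t : ℕ) (c d : S.FChain t), S.IsInflSeries c X ∧ S.IsInflSeries d Y ∧
    ∃ e : Equiv.Perm (Fin t), ∀ i, Nonempty (c.factor i ≅ d.factor (e i))

/-- Simplicity of `M` with respect to the extriangulated structure restricted to the
extension-closed subcategory `𝒮`: extriangles of the restricted structure are exactly
the ambient extriangles all of whose terms lie in `𝒮`. -/
def SimpleIn (𝒮 : Set C) (M : C) : Prop :=
  M ∈ 𝒮 ∧ ¬ IsZero M ∧ ∀ (A X : C) (a : A ⟶ M) (g : M ⟶ X) (δ : S.Ext X A),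
    A ∈ 𝒮 → X ∈ 𝒮 → S.IsExtriangle a g δ → a = 0 ∨ IsIso a

/-- `c` is a composition series of `M` in the extriangulated structure restricted to `𝒮`. -/
def IsCompSeriesIn (𝒮 : Set C) {t : ℕ} (c : S.FChain t) (M : C) : Prop :=
  IsZero (c.obj 0) ∧ c.obj (Fin.last t) = M ∧ (∀ i, c.obj i ∈ 𝒮) ∧
    ∀ i, S.SimpleIn 𝒮 (c.factor i)

section Star

variable [HasZeroObject C] [HasFiniteBiproducts C]

/-- The subcategory `P ∗ Q` of objects `Z` admitting an extriangle `X → Z → Y ⇢`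
with `X ∈ P` and `Y ∈ Q`. -/
def star (P Q : Set C) : Set C :=
  {Z | ∃ (X Y : C) (f : X ⟶ Z) (g : Z ⟶ Y) (δ : S.Ext Y X),
      X ∈ P ∧ Y ∈ Q ∧ S.IsExtriangle f g δ}

/-- Iterated `∗` of a list of subcategories (the empty `∗` being the zero objects). -/
def starMany : List (Set C) → Set C
  | [] => {Z | IsZero Z}
  | P :: l => S.star P (starMany l)

end Star

/-- The relative projectives `P(P) = {Z : E(Z, Y) = 0 for all Y ∈ F(P)}`. -/
def projSet (P : Set C) : Set C :=
  {Z | ∀ Y ∈ S.Filt P, ∀ δ : S.Ext Z Y, δ = 0}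

/-- `Hom(W, −)` is left exact on the extriangulated structure restricted to `𝒮`:
for every extriangle `A →a B → X ⇢` with all terms in `𝒮`, composition with `a`
is injective on morphisms from `W`. -/
def HomLeftExactOn (W : C) (𝒮 : Set C) : Prop :=
  ∀ (A B X : C) (a : A ⟶ B) (g : B ⟶ X) (δ : S.Ext X A),
    A ∈ 𝒮 → B ∈ 𝒮 → X ∈ 𝒮 → S.IsExtriangle a g δ →
    ∀ φ ψ : W ⟶ A, φ ≫ a = ψ ≫ a → φ = ψ

/-- The subset of the free abelian group on objects consisting of the defining
relations of the Grothendieck group `K₀(A, E, s)`. -/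
def K0Rels : Set (FreeAbelianGroup C) :=
  {x | ∃ (A B X : C) (f : A ⟶ B) (g : B ⟶ X) (δ : S.Ext X A), S.IsExtriangle f g δ ∧
      x = FreeAbelianGroup.of A + FreeAbelianGroup.of X - FreeAbelianGroup.of B} ∪
  {x | ∃ (X Y : C) (_ : X ≅ Y), x = FreeAbelianGroup.of X - FreeAbelianGroup.of Y}

/-- `[M] = [M']` in the Grothendieck group `K₀(A, E, s)`, the quotient of the free
abelian group on (isomorphism classes of) objects by the extriangle relations. -/
def GrpRel (M M' : C) : Prop :=
  FreeAbelianGroup.of M - FreeAbelianGroup.of M' ∈ AddSubgroup.closure S.K0Rels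

end PreExt

/-- The congruence defining the Grothendieck monoid: `MonRel S M M'` holds if and only
if `[M] = [M']` in the Grothendieck monoid `M(A, E, s)`, the quotient of the monoid of
isomorphism classes of objects (under `⊞`) by the congruence generated by
`[B] ∼ [A] + [X]` for each extriangle `A → B → X ⇢`. -/
inductive MonRel {C : Type u} [Category.{v} C] [Preadditive C] [HasZeroObject C]
    [HasFiniteBiproducts C] (S : PreExt C) : C → C → Prop
  | of {A B X : C} {f : A ⟶ B} {g : B ⟶ X} {δ : S.Ext X A}
      (h : S.IsExtriangle f g δ) : MonRel S B (A ⊞ X)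
  | iso {X Y : C} (e : X ≅ Y) : MonRel S X Y
  | symm {X Y : C} : MonRel S X Y → MonRel S Y X
  | trans {X Y Z : C} : MonRel S X Y → MonRel S Y Z → MonRel S X Z
  | add {X Y : C} (Z : C) : MonRel S X Y → MonRel S (X ⊞ Z) (Y ⊞ Z)

/-- `[M]` is an atom of the Grothendieck monoid `M(A, E, s)`. -/
def IsAtomClass {C : Type u} [Category.{v} C] [Preadditive C] [HasZeroObject C]
    [HasFiniteBiproducts C] (S : PreExt C) (M : C) : Prop :=
  ¬ MonRel S M 0 ∧ ∀ X Y : C, MonRel S M (X ⊞ Y) → MonRel S X 0 ∨ MonRel S Y 0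

/-- An additive category is weakly idempotent complete if every retraction admits a kernel. -/
def WeaklyIdemComplete (C : Type u) [Category.{v} C] [Preadditive C] : Prop :=
  ∀ (X Y : C) (r : X ⟶ Y), IsSplitEpi r → HasKernel r

/-- A set of objects is closed under direct summands. -/
def ClosedSummands {C : Type u} [Category.{v} C] [Preadditive C] [HasZeroObject C]
    [HasFiniteBiproducts C] (P : Set C) : Prop :=
  ∀ (X Y Z : C), Z ∈ P → Nonempty (Z ≅ X ⊞ Y) → X ∈ P

/-- A Krull–Schmidt category: every object is a finite biproduct of objects having
local endomorphism rings. -/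
def KrullSchmidtCat (C : Type u) [Category.{v} C] [Preadditive C] [HasZeroObject C]
    [HasFiniteBiproducts C] : Prop :=
  ∀ X : C, ∃ (n : ℕ) (Y : Fin n → C),
    (∀ i, IsLocalRing (End (Y i))) ∧ Nonempty (X ≅ ⨁ Y)

/-- The closure `add Ψ` of a set of objects under finite direct sums and isomorphisms. -/
def addSet {C : Type u} [Category.{v} C] [Preadditive C] [HasZeroObject C]
    [HasFiniteBiproducts C] (P : Set C) : Set C :=
  {X | ∃ (m : ℕ) (f : Fin m → C), (∀ k, f k ∈ P) ∧ Nonempty (X ≅ ⨁ f)}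

/-- An indecomposable object. -/
def Indec {C : Type u} [Category.{v} C] [Preadditive C] [HasZeroObject C]
    [HasFiniteBiproducts C] (X : C) : Prop :=
  ¬ IsZero X ∧ ∀ (Y Z : C), Nonempty (X ≅ Y ⊞ Z) → IsZero Y ∨ IsZero Z

/-- A morphism `q` is right minimal. -/
def RightMinimal {C : Type u} [Category.{v} C] {X Y : C} (q : X ⟶ Y) : Prop :=
  ∀ g : X ⟶ X, g ≫ q = q → IsIso g

/-- The extra structure making an extriangulated category into an artin `R`-linear
extriangulated category: an `R`-module structure on each `E(X, A)` for which `E` is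
`R`-bilinear, with all Hom-sets and all `E(X, A)` of finite length over `R`. -/
structure ArtinLinear {C : Type u} [Category.{v} C] [Preadditive C]
    (R : Type*) [CommRing R] [CategoryTheory.Linear R C] (S : PreExt C) where
  module : ∀ X A : C, Module R (S.Ext X A)
  push_smul : ∀ {X A A' : C} (r : R) (a : A ⟶ A') (δ : S.Ext X A),
      S.push (r • a) δ = letI := module X A'; r • S.push a δ
  pull_smul : ∀ {X' X A : C} (r : R) (c : X' ⟶ X) (δ : S.Ext X A),
      S.pull (r • c) δ = letI := module X' A; r • S.pull c δ
  homFinite : ∀ X Y : C, IsFiniteLength R (X ⟶ Y)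
  extFinite : ∀ X A : C, letI := module X A; IsFiniteLength R (S.Ext X A)

/-- An `E`-stratifying system: a finite family of indecomposable objects subject to
the orthogonality axioms (S1) and (S2). -/
structure IsStratSys {C : Type u} [Category.{v} C] [Preadditive C] [HasZeroObject C]
    [HasFiniteBiproducts C] (S : PreExt C) {n : ℕ} (Φ : Fin n → C) : Prop where
  indec : ∀ i, Indec (Φ i)
  s1 : ∀ i j : Fin n, i < j → ∀ φ : Φ j ⟶ Φ i, φ = 0
  s2 : ∀ i j : Fin n, i ≤ j → ∀ δ : S.Ext (Φ j) (Φ i), δ = 0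

/-- The data of extriangles `K i → Q i → Φ i ⇢η i` with `K i ∈ F(Φ_{j>i})`, as in
axiom (PS2) of a projective `E`-stratifying system. -/
structure ProjData {C : Type u} [Category.{v} C] [Preadditive C]
    (S : PreExt C) {n : ℕ} (Φ Q : Fin n → C) where
  K : Fin n → C
  k : ∀ i, K i ⟶ Q i
  q : ∀ i, Q i ⟶ Φ i
  η : ∀ i, S.Ext (Φ i) (K i)
  ext : ∀ i, S.IsExtriangle (k i) (q i) (η i)
  kmem : ∀ i, K i ∈ S.Filt (Φ '' {j | i < j})

/-- `(Φ, Q)` is a projective `E`-stratifying system. -/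
def IsProjSS {C : Type u} [Category.{v} C] [Preadditive C] [HasZeroObject C]
    [HasFiniteBiproducts C] (S : PreExt C) {n : ℕ} (Φ Q : Fin n → C) : Prop :=
  IsStratSys S Φ ∧ (∀ i j : Fin n, ∀ δ : S.Ext (Q i) (Φ j), δ = 0) ∧
    Nonempty (ProjData S Φ Q)

/-- `(Φ, Q)` is a minimal projective `E`-stratifying system: the morphisms `q i` of
the extriangles witnessing (PS2) may be chosen right minimal. -/
def IsMinProjSS {C : Type u} [Category.{v} C] [Preadditive C] [HasZeroObject C]
    [HasFiniteBiproducts C] (S : PreExt C) {n : ℕ} (Φ Q : Fin n → C) : Prop :=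
  IsStratSys S Φ ∧ (∀ i j : Fin n, ∀ δ : S.Ext (Q i) (Φ j), δ = 0) ∧
    ∃ d : ProjData S Φ Q, ∀ i, RightMinimal (d.q i)

/-!
For a filtration of `M` with factors `Φ_{j(1)}, …, Φ_{j(t)}`, apply `Hom(Q_i, -)`. Since
`Hom(Q_i, -)` is left exact on `F(Φ)` and `E(Q_i, -)` vanishes there, every extriangle
`A → B → X ⇢` of `F(Φ)` yields a short exact sequence
`0 → Hom(Q_i, A) → Hom(Q_i, B) → Hom(Q_i, X) → 0`, so the `R`-length of `Hom(Q_i, M)` is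
`∑_k ℓ(Q_i, Φ_{j(k)})`, independently of the filtration. The matrix `ℓ(Q_i, Φ_p)` is
triangular: for `p < i` a map `Q_i → Φ_p` kills `K_i ∈ F(Φ_{>i})`, so it factors through `q_i`
and vanishes by (S1). Its diagonal is non-zero, i.e. `q_i ≠ 0`, by descending induction: if
`q_i = 0`, minimality forces `Q_i = 0`, so `Hom(Q_j, K_i) = 0` by left exactness, and `q_j`
lifts along the last step `K_i → Φ_j` (`j > i`) of the filtration of `K_i`, whence `q_j = 0`.
Hence the multiplicities of the `Φ_p` are determined by `M`.
-/

section Multiplicities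

lemma eq_add_sum_of_succ_eq_add {M : Type*} [AddCommMonoid M] :
    ∀ {t : ℕ} (a : Fin (t + 1) → M) (b : Fin t → M),
      (∀ k, a k.succ = a k.castSucc + b k) → a (Fin.last t) = a 0 + ∑ k, b k
  | 0, a, _, _ => by simp
  | t + 1, a, b, h => by
    rw [Fin.sum_univ_castSucc, ← add_assoc, ← Fin.succ_last, h]
    exact congrArg (· + b (Fin.last t))
      (eq_add_sum_of_succ_eq_add (a ∘ Fin.castSucc) (b ∘ Fin.castSucc) fun k => h k.castSucc)

lemma eq_of_sum_mul_eq_of_triangular {ι : Type*} [Fintype ι] [LinearOrder ι]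
    (ℓ : ι → ι → ℕ) (hlow : ∀ i p, p < i → ℓ i p = 0) (hdiag : ∀ i, ℓ i i ≠ 0)
    {m m' : ι → ℕ} (h : ∀ i, ∑ p, m p * ℓ i p = ∑ p, m' p * ℓ i p) : m = m' := by
  classical
  funext i
  induction i using WellFoundedGT.induction with
  | _ i ih =>
    have hrest : ∑ p ∈ Finset.univ.erase i, m p * ℓ i p =
        ∑ p ∈ Finset.univ.erase i, m' p * ℓ i p := by
      refine Finset.sum_congr rfl fun p hp => ?_
      rcases lt_or_gt_of_ne (Finset.ne_of_mem_erase hp) with hpi | hip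
      · rw [hlow i p hpi, mul_zero, mul_zero]
      · rw [ih p hip]
    have hi := h i
    rw [← Finset.add_sum_erase _ _ (Finset.mem_univ i),
      ← Finset.add_sum_erase _ _ (Finset.mem_univ i), hrest] at hi
    exact Nat.eq_of_mul_eq_mul_right (Nat.pos_of_ne_zero (hdiag i)) (Nat.add_right_cancel hi)

lemma exists_equiv_of_card_fiber_eq {α β ι : Type*} [Fintype α] [Fintype β] [DecidableEq ι]
    {f : α → ι} {g : β → ι}
    (h : ∀ i, Fintype.card {a // f a = i} = Fintype.card {b // g b = i}) :
    ∃ e : α ≃ β, ∀ a, f a = g (e a) :=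
  ⟨Equiv.ofFiberEquiv fun i => Fintype.equivOfCardEq (h i),
    fun a => (Equiv.ofFiberEquiv_map _ a).symm⟩

lemma sum_comp_eq_sum_card_fiber_mul {α ι : Type*} [Fintype α] [Fintype ι] [DecidableEq ι]
    (f : α → ι) (w : ι → ℕ) : ∑ a, w (f a) = ∑ p, Fintype.card {a // f a = p} * w p := by
  simp only [← Fintype.sum_fiberwise' f w, Finset.sum_const, Finset.card_univ, smul_eq_mul]

lemma exists_equiv_of_sum_comp_eq_of_triangular {ι α β : Type*} [Fintype ι] [LinearOrder ι]
    [Fintype α] [Fintype β] (ℓ : ι → ι → ℕ) (hlow : ∀ i p, p < i → ℓ i p = 0)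
    (hdiag : ∀ i, ℓ i i ≠ 0) (f : α → ι) (g : β → ι)
    (h : ∀ i, ∑ a, ℓ i (f a) = ∑ b, ℓ i (g b)) : ∃ e : α ≃ β, ∀ a, f a = g (e a) := by
  classical
  have hcard := eq_of_sum_mul_eq_of_triangular ℓ hlow hdiag
    (m := fun p => Fintype.card {a // f a = p}) (m' := fun p => Fintype.card {b // g b = p})
    fun i => by rw [← sum_comp_eq_sum_card_fiber_mul, ← sum_comp_eq_sum_card_fiber_mul, h]
  exact exists_equiv_of_card_fiber_eq (congrFun hcard)

end Multiplicities

namespace PreExt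

section Functoriality

variable {C : Type u} [Category.{v} C] [Preadditive C] {S : PreExt C}

lemma push_id {X A : C} (δ : S.Ext X A) : S.push (𝟙 A) δ = δ := by
  simp [push]

lemma pull_id {X A : C} (δ : S.Ext X A) : S.pull (𝟙 X) δ = δ := by
  simp [pull]

lemma pull_comp {X'' X' X A : C} (c : X'' ⟶ X') (d : X' ⟶ X) (δ : S.Ext X A) :
    S.pull (c ≫ d) δ = S.pull c (S.pull d δ) := by
  simp [pull]

lemma push_pull_comm {X' X A A' : C} (a : A ⟶ A') (c : X' ⟶ X) (δ : S.Ext X A) :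
    S.push a (S.pull c δ) = S.pull c (S.push a δ) :=
  (ConcreteCategory.congr_hom ((S.E.map c.op).naturality a) δ).symm

lemma push_zero {X A A' : C} (a : A ⟶ A') : S.push a (0 : S.Ext X A) = 0 := by
  simp [push]

end Functoriality

namespace IsET

variable {C : Type u} [Category.{v} C] [Preadditive C] [HasFiniteBiproducts C]
  {S : PreExt C} (hS : S.IsET)
include hS

lemma zero_push {X A A' : C} (δ : S.Ext X A) : S.push (0 : A ⟶ A') δ = 0 := by
  simpa using hS.push_add (0 : A ⟶ A') 0 δ

lemma ext_eq_zero_of_isZero {X A : C} (hA : IsZero A) (δ : S.Ext X A) : δ = 0 := by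
  rw [← push_id δ, hA.eq_of_src (𝟙 A) 0, hS.zero_push]

lemma isExtriangle_zero_id {Z W : C} (hZ : IsZero Z) :
    S.IsExtriangle (0 : Z ⟶ W) (𝟙 W) 0 := by
  simpa using hS.realize_iso
    ⟨biprod.snd, biprod.inr, biprod.hom_ext _ _ (hZ.eq_of_tgt _ _) (by simp), by simp⟩
    (hS.realize_zero Z W)

lemma isExtriangle_id_zero {Q Z : C} (hZ : IsZero Z) :
    S.IsExtriangle (𝟙 Q) (0 : Q ⟶ Z) 0 := by
  simpa using hS.realize_iso
    ⟨biprod.fst, biprod.inl, biprod.hom_ext' _ _ (by simp) (hZ.eq_of_src _ _), by simp⟩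
    (hS.realize_zero Q Z)

lemma isZero_of_isExtriangle_zero {A B X : C} {f : A ⟶ B}
    (h : S.IsExtriangle f (0 : B ⟶ X) 0) : IsZero X := by
  obtain ⟨e, -, he⟩ := hS.realize_unique h (hS.realize_zero A X)
  have hsnd : (biprod.snd : A ⊞ X ⟶ X) = 0 := by
    rw [← e.inv_hom_id_assoc biprod.snd, he, comp_zero]
  rw [IsZero.iff_id_eq_zero, ← biprod.inr_snd, hsnd, comp_zero]

lemma exists_lift_of_pull_eq_zero {A B X T : C} {f : A ⟶ B} {g : B ⟶ X} {δ : S.Ext X A}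
    (h : S.IsExtriangle f g δ) (x : T ⟶ X) (hx : S.pull x δ = 0) :
    ∃ y : T ⟶ B, y ≫ g = x := by
  obtain ⟨b, -, hb⟩ := hS.realize_map (hS.realize_zero A T) h (𝟙 A) x (by rw [push_id, hx])
  exact ⟨biprod.inr ≫ b, by rw [Category.assoc, hb, biprod.inr_snd_assoc]⟩

lemma ext_eq_zero_of_isExtriangle {A B X T : C} {f : A ⟶ B} {g : B ⟶ X} {δ : S.Ext X A}
    (h : S.IsExtriangle f g δ) (hA : ∀ ε : S.Ext T A, ε = 0) (hX : ∀ ε : S.Ext T X, ε = 0)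
    (ε : S.Ext T B) : ε = 0 := by
  -- (ET4) gives a deflation `e' : E₀ ⟶ T` with `e'^* ε ∈ f_* E(E₀, A)`; it splits since
  -- `g_* ε = 0`, so `ε` lies in `f_* E(T, A) = 0`.
  obtain ⟨N, m, e, hme⟩ := hS.realize_exists ε
  obtain ⟨E₀, -, d, e', δ'', -, hsplit, -, hpush, -, -⟩ := hS.et4 h hme
  rw [hX (S.push g ε)] at hsplit
  obtain ⟨u, -, hu⟩ := hS.realize_unique hsplit (hS.realize_zero X T)
  have hsec : (biprod.inr ≫ u.inv) ≫ e' = 𝟙 T := by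
    rw [Category.assoc, ← hu, u.inv_hom_id_assoc, biprod.inr_snd]
  rw [← pull_id ε, ← hsec, pull_comp, ← hpush, ← push_pull_comm, hA (S.pull _ δ''), push_zero]

variable [HasZeroObject C]

lemma comp_eq_zero {A B X : C} {f : A ⟶ B} {g : B ⟶ X} {δ : S.Ext X A}
    (h : S.IsExtriangle f g δ) : f ≫ g = 0 := by
  obtain ⟨a, ha, -⟩ := hS.et3op h (hS.isExtriangle_zero_id (isZero_zero C)) g (𝟙 X) rfl
  simpa using ha

lemma exists_lift_of_comp_eq_zero {A B X T : C} {f : A ⟶ B} {g : B ⟶ X} {δ : S.Ext X A}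
    (h : S.IsExtriangle f g δ) (φ : T ⟶ B) (hφ : φ ≫ g = 0) : ∃ ψ : T ⟶ A, ψ ≫ f = φ := by
  obtain ⟨ψ, hψ, -⟩ := hS.et3op (hS.isExtriangle_id_zero (isZero_zero C)) h φ 0 (by simp [hφ])
  exact ⟨ψ, by simpa using hψ.symm⟩

lemma exists_desc_of_comp_eq_zero {A B X W : C} {f : A ⟶ B} {g : B ⟶ X} {δ : S.Ext X A}
    (h : S.IsExtriangle f g δ) (φ : B ⟶ W) (hφ : f ≫ φ = 0) : ∃ ψ : X ⟶ W, g ≫ ψ = φ := by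
  obtain ⟨ψ, hψ, -⟩ := hS.et3 h (hS.isExtriangle_zero_id (isZero_zero C)) 0 φ (by simp [hφ])
  exact ⟨ψ, by simpa using hψ⟩

lemma hom_eq_zero_of_isExtriangle {A B X W : C} {f : A ⟶ B} {g : B ⟶ X} {δ : S.Ext X A}
    (h : S.IsExtriangle f g δ) (hA : ∀ φ : A ⟶ W, φ = 0) (hX : ∀ ψ : X ⟶ W, ψ = 0)
    (φ : B ⟶ W) : φ = 0 := by
  obtain ⟨ψ, rfl⟩ := hS.exists_desc_of_comp_eq_zero h φ (hA _)
  rw [hX ψ, comp_zero]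

end IsET

section Filtrations

variable {C : Type u} [Category.{v} C] [Preadditive C] {S : PreExt C}

def FChain.truncate {t : ℕ} (c : S.FChain t) (m : ℕ) (hm : m ≤ t) : S.FChain m where
  obj k := c.obj ⟨k, by omega⟩
  factor k := c.factor ⟨k, by omega⟩
  f k := c.f ⟨k, by omega⟩
  g k := c.g ⟨k, by omega⟩
  δ k := c.δ ⟨k, by omega⟩
  ext k := c.ext ⟨k, by omega⟩

lemma FChain.obj_mem_filt {P : Set C} {t : ℕ} (c : S.FChain t) (h0 : IsZero (c.obj 0))
    (hfac : ∀ k, c.factor k ∈ P) (i : Fin (t + 1)) : c.obj i ∈ S.Filt P :=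
  ⟨i, c.truncate i (by omega), h0, rfl, fun _ => hfac _⟩

lemma zero_mem_filt {Z : C} (hZ : IsZero Z) (P : Set C) : Z ∈ S.Filt P :=
  ⟨0, ⟨fun _ => Z, (·.elim0), (·.elim0), (·.elim0), (·.elim0), (·.elim0)⟩, hZ, rfl, (·.elim0)⟩

lemma filt_mono {P P' : Set C} (h : P ⊆ P') : S.Filt P ⊆ S.Filt P' := by
  rintro M ⟨t, c, h0, htop, hfac⟩
  exact ⟨t, c, h0, htop, fun k => h (hfac k)⟩

lemma exists_isExtriangle_of_mem_filt {P : Set C} {Y : C} (hY : Y ∈ S.Filt P)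
    (hY0 : ¬ IsZero Y) : ∃ (Y' Z : C) (f : Y' ⟶ Y) (g : Y ⟶ Z) (δ : S.Ext Z Y'),
      S.IsExtriangle f g δ ∧ Y' ∈ S.Filt P ∧ Z ∈ P := by
  obtain ⟨t, c, h0, rfl, hfac⟩ := hY
  cases t with
  | zero => exact absurd h0 hY0
  | succ s =>
    exact ⟨_, _, c.f (Fin.last s), c.g (Fin.last s), c.δ (Fin.last s), c.ext (Fin.last s),
      c.obj_mem_filt h0 hfac _, hfac _⟩

lemma IsET.ext_eq_zero_of_mem_filt [HasFiniteBiproducts C] (hS : S.IsET) {T : C} {P : Set C}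
    (hP : ∀ p ∈ P, ∀ ε : S.Ext T p, ε = 0) {Y : C} (hY : Y ∈ S.Filt P) (ε : S.Ext T Y) : ε = 0 := by
  obtain ⟨t, c, h0, rfl, hfac⟩ := hY
  suffices H : ∀ i : Fin (t + 1), ∀ ε : S.Ext T (c.obj i), ε = 0 from H _ ε
  intro i
  induction i using Fin.induction with
  | zero => exact hS.ext_eq_zero_of_isZero h0
  | succ k ih => exact hS.ext_eq_zero_of_isExtriangle (c.ext k) ih (hP _ (hfac k))

variable [HasZeroObject C]

noncomputable def FChain.single (W : C) (hW : S.IsExtriangle (0 : (0 : C) ⟶ W) (𝟙 W) 0) :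
    S.FChain 1 where
  obj := Fin.cases 0 fun _ => W
  factor _ := W
  f | 0 => 0
  g | 0 => 𝟙 W
  δ | 0 => 0
  ext | 0 => hW

variable [HasFiniteBiproducts C] (hS : S.IsET)
include hS

lemma IsET.mem_filt_of_mem {P : Set C} {W : C} (hW : W ∈ P) : W ∈ S.Filt P :=
  ⟨1, .single W (hS.isExtriangle_zero_id (isZero_zero C)), isZero_zero C, rfl, fun _ => hW⟩

lemma IsET.hom_eq_zero_of_mem_filt {W : C} {P : Set C} (hP : ∀ p ∈ P, ∀ φ : p ⟶ W, φ = 0)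
    {Y : C} (hY : Y ∈ S.Filt P) (φ : Y ⟶ W) : φ = 0 := by
  obtain ⟨t, c, h0, rfl, hfac⟩ := hY
  suffices H : ∀ i : Fin (t + 1), ∀ φ : c.obj i ⟶ W, φ = 0 from H _ φ
  intro i
  induction i using Fin.induction with
  | zero => exact fun φ => h0.eq_of_src φ 0
  | succ k ih => exact hS.hom_eq_zero_of_isExtriangle (c.ext k) ih (hP _ (hfac k))

end Filtrations

end PreExt

lemma RightMinimal.isZero_of_eq_zero {C : Type u} [Category.{v} C] [Preadditive C] {X Y : C}
    {q : X ⟶ Y} (hq : RightMinimal q) (h0 : q = 0) : IsZero X := by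
  have : IsIso (0 : X ⟶ X) := hq 0 (by rw [h0, comp_zero])
  rw [IsZero.iff_id_eq_zero, ← IsIso.hom_inv_id (0 : X ⟶ X), zero_comp]

section Length

variable {C : Type u} [Category.{v} C] [Preadditive C] [HasZeroObject C] [HasFiniteBiproducts C]
  (R : Type*) [CommRing R] [CategoryTheory.Linear R C] {S : PreExt C} (hS : S.IsET)
include hS

lemma PreExt.IsET.length_hom_eq_add {𝒮 : Set C} {W A B X : C} (hW : S.HomLeftExactOn W 𝒮)
    (hWA : ∀ ε : S.Ext W A, ε = 0) (hA : A ∈ 𝒮) (hB : B ∈ 𝒮) (hX : X ∈ 𝒮)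
    {a : A ⟶ B} {g : B ⟶ X} {δ : S.Ext X A} (h : S.IsExtriangle a g δ) :
    Module.length R (W ⟶ B) = Module.length R (W ⟶ A) + Module.length R (W ⟶ X) :=
  Module.length_eq_add_of_exact (Linear.rightComp R W a) (Linear.rightComp R W g)
    (fun φ ψ => hW A B X a g δ hA hB hX h φ ψ)
    (fun x => hS.exists_lift_of_pull_eq_zero h x (hWA _))
    (fun φ => ⟨hS.exists_lift_of_comp_eq_zero h φ,
      by rintro ⟨ψ, rfl⟩; simp [hS.comp_eq_zero h]⟩)

lemma PreExt.IsET.length_hom_last_eq_sum {ι : Type*} (Φ : ι → C) {W : C}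
    (hW : S.HomLeftExactOn W (S.Filt (Set.range Φ))) (hWΦ : ∀ p, ∀ ε : S.Ext W (Φ p), ε = 0)
    {t : ℕ} (c : S.FChain t) (j : Fin t → ι) (h0 : IsZero (c.obj 0))
    (hfac : ∀ k, c.factor k = Φ (j k)) :
    Module.length R (W ⟶ c.obj (Fin.last t)) = ∑ k, Module.length R (W ⟶ Φ (j k)) := by
  have : Subsingleton (W ⟶ c.obj 0) := ⟨h0.eq_of_tgt⟩
  have hmem := c.obj_mem_filt (P := Set.range Φ) h0 fun k => ⟨j k, (hfac k).symm⟩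
  have hext : ∀ Y ∈ S.Filt (Set.range Φ), ∀ ε : S.Ext W Y, ε = 0 :=
    fun Y => hS.ext_eq_zero_of_mem_filt (by rintro _ ⟨p, rfl⟩; exact hWΦ p)
  rw [eq_add_sum_of_succ_eq_add (fun i => Module.length R (W ⟶ c.obj i))
      (fun k => Module.length R (W ⟶ c.factor k)) fun k =>
      hS.length_hom_eq_add R hW (hext _ (hmem _)) (hmem _) (hmem _)
        (hS.mem_filt_of_mem ⟨j k, (hfac k).symm⟩) (c.ext k),
    Module.length_eq_zero, zero_add]
  exact Finset.sum_congr rfl fun k _ => by rw [hfac k]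

end Length

section ProjectiveStratifyingSystem

variable {C : Type u} [Category.{v} C] [Preadditive C] [HasZeroObject C] [HasFiniteBiproducts C]
  {S : PreExt C} (hS : S.IsET) {n : ℕ} {Φ Q : Fin n → C} (hΦ : IsStratSys S Φ)
  (R : Type*) [CommRing R] [CategoryTheory.Linear R C]
include hS hΦ

lemma ProjData.hom_eq_zero_of_lt (d : ProjData S Φ Q) {p i : Fin n} (hpi : p < i)
    (φ : Q i ⟶ Φ p) : φ = 0 := by
  have hkφ : d.k i ≫ φ = 0 := by
    refine hS.hom_eq_zero_of_mem_filt ?_ (d.kmem i) _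
    rintro _ ⟨j, hj, rfl⟩ ψ
    exact hΦ.s1 p j (hpi.trans hj) ψ
  obtain ⟨ψ, rfl⟩ := hS.exists_desc_of_comp_eq_zero (d.ext i) φ hkφ
  rw [hΦ.s1 p i hpi ψ, comp_zero]

lemma ProjData.q_ne_zero (hps1 : ∀ i j : Fin n, ∀ δ : S.Ext (Q i) (Φ j), δ = 0)
    (d : ProjData S Φ Q) (hmin : ∀ i, RightMinimal (d.q i))
    (hle : ∀ i, S.HomLeftExactOn (Q i) (S.Filt (Set.range Φ))) (i : Fin n) : d.q i ≠ 0 := by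
  induction i using WellFoundedGT.induction with
  | _ i ih =>
    intro hq
    have hQ : IsZero (Q i) := (hmin i).isZero_of_eq_zero hq
    have hfilt : S.Filt (Φ '' {j | i < j}) ⊆ S.Filt (Set.range Φ) :=
      PreExt.filt_mono (Set.image_subset_range _ _)
    have hK : ¬ IsZero (d.K i) := by
      intro hK
      have h := d.ext i
      rw [hq, hS.ext_eq_zero_of_isZero hK (d.η i)] at h
      exact (hΦ.indec i).1 (hS.isZero_of_isExtriangle_zero h)
    obtain ⟨Y, _, f, g, δ, hext, hY, j, hij, rfl⟩ :=
      PreExt.exists_isExtriangle_of_mem_filt (d.kmem i) hK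
    have hQY : S.pull (d.q j) δ = 0 := by
      refine hS.ext_eq_zero_of_mem_filt ?_ (hfilt hY) _
      rintro _ ⟨p, rfl⟩
      exact hps1 j p
    obtain ⟨y, hy⟩ := hS.exists_lift_of_pull_eq_zero hext (d.q j) hQY
    have hy0 : y = 0 := hle j _ _ _ (d.k i) (d.q i) (d.η i) (hfilt (d.kmem i))
      (PreExt.zero_mem_filt hQ _) (hS.mem_filt_of_mem ⟨i, rfl⟩) (d.ext i) y 0 (hQ.eq_of_tgt _ _)
    exact ih j hij (by rw [← hy, hy0, zero_comp])

lemma ProjData.length_hom_eq_zero_of_lt (d : ProjData S Φ Q) {p i : Fin n} (hpi : p < i) :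
    Module.length R (Q i ⟶ Φ p) = 0 :=
  have : Subsingleton (Q i ⟶ Φ p) := ⟨fun φ ψ => by
    rw [d.hom_eq_zero_of_lt hS hΦ hpi φ, d.hom_eq_zero_of_lt hS hΦ hpi ψ]⟩
  Module.length_eq_zero

lemma ProjData.length_hom_pos (hps1 : ∀ i j : Fin n, ∀ δ : S.Ext (Q i) (Φ j), δ = 0)
    (d : ProjData S Φ Q) (hmin : ∀ i, RightMinimal (d.q i))
    (hle : ∀ i, S.HomLeftExactOn (Q i) (S.Filt (Set.range Φ))) (i : Fin n) :
    0 < Module.length R (Q i ⟶ Φ i) :=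
  have : Nontrivial (Q i ⟶ Φ i) := ⟨_, _, d.q_ne_zero hS hΦ hps1 hmin hle i⟩
  Module.length_pos

end ProjectiveStratifyingSystem

section Statements

variable {C : Type u} [Category.{v} C] [Preadditive C] [HasZeroObject C] [HasFiniteBiproducts C]

variable (R : Type*) [CommRing R] [IsArtinianRing R] [CategoryTheory.Linear R C]
  [IsIdempotentComplete C]

theorem stmt18 (S : PreExt C) (hS : S.IsET) (art : ArtinLinear R S)
    {n : ℕ} (Φ Q : Fin n → C) (hΦ : IsStratSys S Φ)
    (hps1 : ∀ i j : Fin n, ∀ δ : S.Ext (Q i) (Φ j), δ = 0)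
    (d : ProjData S Φ Q) (hmin : ∀ i, RightMinimal (d.q i))
    (hle : ∀ i, S.HomLeftExactOn (Q i) (S.Filt (Set.range Φ)))
    (M : C) (t₁ t₂ : ℕ) (c₁ : S.FChain t₁) (c₂ : S.FChain t₂)
    (j₁ : Fin t₁ → Fin n) (j₂ : Fin t₂ → Fin n)
    (h₁0 : IsZero (c₁.obj 0)) (h₁top : c₁.obj (Fin.last t₁) = M)
    (h₁fac : ∀ i, c₁.factor i = Φ (j₁ i))
    (h₂0 : IsZero (c₂.obj 0)) (h₂top : c₂.obj (Fin.last t₂) = M)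
    (h₂fac : ∀ i, c₂.factor i = Φ (j₂ i)) :
    t₁ = t₂ ∧ ∃ e : Fin t₁ ≃ Fin t₂, ∀ i, j₁ i = j₂ (e i) := by
  let ℓ (i p : Fin n) : ℕ := (Module.length R (Q i ⟶ Φ p)).toNat
  have hℓ (i p : Fin n) : Module.length R (Q i ⟶ Φ p) = ℓ i p :=
    (ENat.natCast_toNat (Module.length_ne_top_iff.mpr (art.homFinite _ _))).symm
  have hlow (i p : Fin n) (hpi : p < i) : ℓ i p = 0 := by
    rw [← Nat.cast_eq_zero (R := ℕ∞), ← hℓ, d.length_hom_eq_zero_of_lt hS hΦ R hpi]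
  have hdiag (i : Fin n) : ℓ i i ≠ 0 := by
    rw [← Nat.cast_ne_zero (R := ℕ∞), ← hℓ]
    exact (d.length_hom_pos hS hΦ R hps1 hmin hle i).ne'
  have hsum (i : Fin n) : ∑ k, ℓ i (j₁ k) = ∑ k, ℓ i (j₂ k) := by
    have e₁ := hS.length_hom_last_eq_sum R Φ (hle i) (hps1 i) c₁ j₁ h₁0 h₁fac
    have e₂ := hS.length_hom_last_eq_sum R Φ (hle i) (hps1 i) c₂ j₂ h₂0 h₂fac
    rw [h₁top] at e₁
    rw [h₂top] at e₂
    simp only [hℓ, ← Nat.cast_sum] at e₁ e₂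
    exact_mod_cast e₁.symm.trans e₂
  obtain ⟨e, he⟩ := exists_equiv_of_sum_comp_eq_of_triangular ℓ hlow hdiag j₁ j₂ hsum
  exact ⟨Fin.equiv_iff_eq.mp ⟨e⟩, e, he⟩

end Statements

end ExtriPaper
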